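/- arXiv:1712.01155 — 3 statements merged into one kernel-verified Lean document; each statement's English description precedes it below -/
import Mathlib

section
/- For every l ≥ 1 one has h_{l−2}^1 = r_l. Moreover, r_l depends only on the first l+1 entries s_0, …, s_l of the sequence: if two sequences satisfying the hypotheses agree in entries 0, …, l, then the corresponding values r_l coincide. -/
/-- The numbers `f_l^k` with the first index shifted by two: `fRec s l k = f_{l-2}^k`. -/
noncomputable def fRec (s : ℕ → ℂ) : ℕ → ℕ → ℂ
  | 0 => fun k => if k = 0 then 1 else 0
  | 1 => fun k => if k = 0 then 1 else 0
  | 2 => fun k => s k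
  | l + 3 => fun k =>
      ((-1) ^ l / fRec s l 0) *
        (fRec s (l + 2) 0 * fRec s (l + 1) (k + 1) - fRec s (l + 1) 0 * fRec s (l + 2) (k + 1))

/-- `rCoef s 0 = r_0 = 0` and for `l ≥ 1`,
`rCoef s l = r_l = (−1)^{l−1} f_l^0 f_{l−3}^0 / (f_{l−2}^0 f_{l−1}^0)`. -/
noncomputable def rCoef (s : ℕ → ℂ) : ℕ → ℂ
  | 0 => 0
  | l + 1 => (-1) ^ l * (fRec s (l + 3) 0 * fRec s l 0) / (fRec s (l + 1) 0 * fRec s (l + 2) 0)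

/-- The numbers `h_l^k` with the first index shifted by one: `hNum s l k = h_{l-1}^k`, so
`hNum s 0 k = h_{-1}^k = −s_k/s_0`, `hNum s 1 k = h_0^k = s_k/s_0 − s_{k+1}/s_1`, and for
`l ≥ 1`, `h_l^k = h_{l−2}^{k+1}/h_{l−2}^1 − h_{l−1}^{k+1}/h_{l−1}^1`. -/
noncomputable def hNum (s : ℕ → ℂ) : ℕ → ℕ → ℂ
  | 0 => fun k => -(s k / s 0)
  | 1 => fun k => s k / s 0 - s (k + 1) / s 1
  | l + 2 => fun k =>
      hNum s l (k + 1) / hNum s l 1 - hNum s (l + 1) (k + 1) / hNum s (l + 1) 1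

/-!
Divide each `f_l^k` by `f_l^0`, obtaining `F_l^k`. The recursion for `f` says that
`F_{l+1}^k = (F_{l-1}^{k+1} − F_l^{k+1}) / (F_{l-1}^1 − F_l^1)`, and the denominator
`F_{l-1}^1 − F_l^1` equals `r_{l+1}`. Hence the differences `F_{l-1}^k − F_l^k` obey the
recursion defining `h_{l-1}^k`, and at `k = 1` they are `r_{l+1}`. Independently, `f_l^k` only
involves `s_0, …, s_{l+k}`.
-/

/-- `fNormalized s l k = f_{l-2}^k / f_{l-2}^0`, indexed like `fRec`. -/
noncomputable def fNormalized (s : ℕ → ℂ) (l k : ℕ) : ℂ := fRec s l k / fRec s l 0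

section Recursion

variable {s : ℕ → ℂ}

theorem fRec_add_three (l k : ℕ) :
    fRec s (l + 3) k = ((-1) ^ l / fRec s l 0) *
      (fRec s (l + 2) 0 * fRec s (l + 1) (k + 1) - fRec s (l + 1) 0 * fRec s (l + 2) (k + 1)) :=
  rfl

theorem neg_one_pow_mul_fRec_add_three_zero {l : ℕ} (hl : fRec s l 0 ≠ 0) :
    (-1) ^ l * (fRec s (l + 3) 0 * fRec s l 0) =
      fRec s (l + 2) 0 * fRec s (l + 1) 1 - fRec s (l + 1) 0 * fRec s (l + 2) 1 := by
  have hsq : ((-1 : ℂ) ^ l) ^ 2 = 1 := by rw [← pow_mul, (even_two.mul_left l).neg_one_pow]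
  rw [fRec_add_three]
  field_simp
  rw [hsq, one_mul]

variable (hf : ∀ l, fRec s l 0 ≠ 0)
include hf

theorem fNormalized_sub_one_eq_rCoef (l : ℕ) :
    fNormalized s (l + 1) 1 - fNormalized s (l + 2) 1 = rCoef s (l + 1) := by
  rw [fNormalized, fNormalized, div_sub_div _ _ (hf _) (hf _), rCoef,
    neg_one_pow_mul_fRec_add_three_zero (hf l)]
  ring

theorem fNormalized_add_three (l k : ℕ) :
    fNormalized s (l + 3) k =
      (fNormalized s (l + 1) (k + 1) - fNormalized s (l + 2) (k + 1)) / rCoef s (l + 1) := by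
  have hsq : ((-1 : ℂ) ^ l) ^ 2 = 1 := by rw [← pow_mul, (even_two.mul_left l).neg_one_pow]
  have h₀ := hf l
  have h₁ := hf (l + 1)
  have h₂ := hf (l + 2)
  have h₃ := hf (l + 3)
  rw [fNormalized, fNormalized, fNormalized, div_sub_div _ _ h₁ h₂, rCoef, fRec_add_three l k]
  field_simp
  linear_combination
    (fRec s (l + 2) 0 * fRec s (l + 1) (k + 1) - fRec s (l + 1) 0 * fRec s (l + 2) (k + 1)) * hsq

theorem hNum_eq_fNormalized_sub (l k : ℕ) :
    hNum s l (k + 1) = fNormalized s (l + 1) (k + 1) - fNormalized s (l + 2) (k + 1) := by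
  induction l using Nat.twoStepInduction generalizing k with
  | zero => simp [hNum, fNormalized, fRec]
  | one => simp [hNum, fNormalized, fRec]
  | more l ih₀ ih₁ =>
    simp only [hNum, ih₀, ih₁, zero_add, fNormalized_sub_one_eq_rCoef hf]
    rw [← fNormalized_add_three hf, ← fNormalized_add_three hf]

theorem hNum_one_eq_rCoef (l : ℕ) : hNum s l 1 = rCoef s (l + 1) := by
  rw [hNum_eq_fNormalized_sub hf l 0, fNormalized_sub_one_eq_rCoef hf]

end Recursion

theorem fRec_congr {s s' : ℕ → ℂ} :
    ∀ l k, (∀ j, j + 2 ≤ l + k → s j = s' j) → fRec s l k = fRec s' l k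
  | 0, _, _ => rfl
  | 1, _, _ => rfl
  | 2, k, h => h k (by omega)
  | l + 3, k, h => by
    rw [fRec_add_three, fRec_add_three, fRec_congr l 0 (fun j hj => h j (by omega)),
      fRec_congr (l + 1) 0 (fun j hj => h j (by omega)),
      fRec_congr (l + 2) 0 (fun j hj => h j (by omega)),
      fRec_congr (l + 1) (k + 1) (fun j hj => h j (by omega)),
      fRec_congr (l + 2) (k + 1) (fun j hj => h j (by omega))]

theorem rCoef_congr {s s' : ℕ → ℂ} {l : ℕ} (h : ∀ k ≤ l, s k = s' k) :
    rCoef s l = rCoef s' l := by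
  cases l with
  | zero => rfl
  | succ l =>
    have agree : ∀ i ≤ l + 3, fRec s i 0 = fRec s' i 0 := fun i hi =>
      fRec_congr _ _ (fun j hj => h j (by omega))
    simp only [rCoef]
    rw [agree l (by omega), agree (l + 1) (by omega), agree (l + 2) (by omega),
      agree (l + 3) le_rfl]

/-- For every `l ≥ 1` one has `h_{l−2}^1 = r_l` (with the shifted indexing
this reads `hNum s (l-1) 1 = rCoef s l`, stated below for `l = m + 1`).  Moreover, `r_l`
depends only on the entries `s_0, …, s_l`: if two sequences satisfying the hypotheses agree
in entries `0, …, l`, the corresponding values `r_l` coincide. -/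
theorem h_eq_r_and_dependence
    (s : ℕ → ℂ) (hf : ∀ l, fRec s l 0 ≠ 0) :
    (∀ m : ℕ, hNum s m 1 = rCoef s (m + 1)) ∧
    (∀ s' : ℕ → ℂ, (∀ l, fRec s' l 0 ≠ 0) →
      ∀ l : ℕ, (∀ k ≤ l, s k = s' k) → rCoef s l = rCoef s' l) :=
  ⟨hNum_one_eq_rCoef hf, fun _ _ _ h => rCoef_congr h⟩
end

section
/- For every n ≥ 1 there exists a nonzero polynomial p in the 2n complex variables s_0, …, s_{2n−1} such that for every s = (s_0, …, s_{2n−1}) ∈ ℂ^{2n} with p(s) ≠ 0, the polynomial Q_n^{(s)}(w) has degree exactly n and has n pairwise distinct (simple) roots. In particular, the set of s ∈ ℂ^{2n} for which Q_n^{(s)} fails to have n simple roots is contained in a proper algebraic subset of ℂ^{2n}. -/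
open Polynomial

/-- Jacobi's determinant formula for the denominator `Q_n` of the `[n−1/n]` Padé
approximant of `Σ_k s_k w^{−k}`: the determinant of the `(n+1)×(n+1)` matrix whose entry in
row `i` (`0 ≤ i ≤ n−1`), column `j` (`0 ≤ j ≤ n`) is `s_{n+i−j}`, and whose last row is
`(1, w, w², …, w^n)`. -/
noncomputable def QJac (n : ℕ) (s : Fin (2 * n) → ℂ) : Polynomial ℂ :=
  Matrix.det (Matrix.of fun i j : Fin (n + 1) =>
    if h : (i : ℕ) < n then C (s ⟨n + (i : ℕ) - (j : ℕ), by omega⟩) else X ^ (j : ℕ))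

/-!
The coefficients of `Q_n^{(s)}` are polynomials in `s`, so the leading coefficient `[w^n] Q_n`
times the resultant of `Q_n` and `Q_n'` (taken with the formal degrees `n` and `n - 1`) is a
polynomial `p` in `s`. Where `p(s) ≠ 0`, `Q_n^{(s)}` has degree `n` and is coprime to its
derivative, hence has `n` simple roots. Finally `p ≠ 0` because at `s = e_0 + e_n` the Jacobi
determinant is `w^n - 1`, which is separable.
-/

open Matrix

section

variable {R : Type*} [CommRing R]

theorem natDegree_det_le_of_natDegree_eq_zero_off_row {m d : ℕ}
    (M : Matrix (Fin (m + 1)) (Fin (m + 1)) R[X]) (r : Fin (m + 1))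
    (hconst : ∀ i ≠ r, ∀ j, (M i j).natDegree = 0) (hr : ∀ j, (M r j).natDegree ≤ d) :
    M.det.natDegree ≤ d := by
  rw [det_succ_row M r]
  refine natDegree_sum_le_of_forall_le _ _ fun j _ => ?_
  set N := M.submatrix r.succAbove j.succAbove
  have hN : N = (N.map fun p => p.coeff 0).map C :=
    Matrix.ext fun i k => eq_C_of_natDegree_eq_zero (hconst _ (Fin.succAbove_ne r i) _)
  rw [hN, ← RingHom.mapMatrix_apply, ← RingHom.map_det, mul_comm, ← mul_assoc,
    show (-1 : R[X]) ^ (r + j : ℕ) = C ((-1) ^ (r + j : ℕ)) by simp, ← C_mul]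
  exact natDegree_C_mul_le _ _ |>.trans (hr j)

variable (n : ℕ)

noncomputable def padeMatrix (s : Fin (2 * n) → R) :
    Matrix (Fin (n + 1)) (Fin (n + 1)) R[X] :=
  of fun i j =>
    if h : (i : ℕ) < n then C (s ⟨n + (i : ℕ) - (j : ℕ), by omega⟩) else X ^ (j : ℕ)

theorem QJac_eq_det_padeMatrix (s : Fin (2 * n) → ℂ) : QJac n s = (padeMatrix n s).det := rfl

theorem map_det_padeMatrix {S : Type*} [CommRing S] (φ : R →+* S) (s : Fin (2 * n) → R) :
    (padeMatrix n s).det.map φ = (padeMatrix n (φ ∘ s)).det := by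
  rw [← coe_mapRingHom, RingHom.map_det]
  congr 1
  refine Matrix.ext fun i j => ?_
  simp only [padeMatrix, RingHom.mapMatrix_apply, map_apply, of_apply]
  split_ifs <;> simp

theorem natDegree_det_padeMatrix_le (s : Fin (2 * n) → R) :
    (padeMatrix n s).det.natDegree ≤ n := by
  refine natDegree_det_le_of_natDegree_eq_zero_off_row _ (Fin.last n) (fun i hi j => ?_)
    fun j => ?_
  · simp [padeMatrix, Fin.val_lt_last hi]
  · simpa [padeMatrix] using natDegree_X_pow_le (R := R) (j : ℕ) |>.trans j.is_le

theorem det_padeMatrix_eq_X_pow_sub_one {n : ℕ} (hn : 0 < n) :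
    (padeMatrix n fun k => if (k : ℕ) = 0 ∨ (k : ℕ) = n then (1 : R) else 0).det =
      X ^ n - 1 := by
  set M := padeMatrix n fun k => if (k : ℕ) = 0 ∨ (k : ℕ) = n then (1 : R) else 0
  rw [← det_submatrix_equiv_self finSumFinEquiv]
  have hblocks : M.submatrix finSumFinEquiv finSumFinEquiv =
      fromBlocks 1 (of fun (i : Fin n) (_ : Fin 1) => if (i : ℕ) = 0 then (1 : R[X]) else 0)
        (of fun _ (j : Fin n) => X ^ (j : ℕ)) (of fun _ _ => X ^ n) := by
    refine Matrix.ext fun i j => ?_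
    rcases i with i | i <;> rcases j with j | j
    · simp only [fromBlocks_apply₁₁, one_apply, Fin.ext_iff]
      simp [M, padeMatrix]
      split_ifs <;> first | rfl | omega
    · simp [M, padeMatrix]
      split_ifs <;> first | rfl | omega
    · simp [M, padeMatrix]
    · simp [M, padeMatrix]
  rw [hblocks, det_fromBlocks_one₁₁, det_unique]
  simp only [Matrix.sub_apply, mul_apply, of_apply]
  rw [Fintype.sum_eq_single ⟨0, hn⟩ fun j hj => by
    rw [if_neg fun h => hj (Fin.ext h), mul_zero]]
  simp

end

section

variable {K : Type*} [Field K]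

theorem resultant_derivative_ne_zero_iff_separable [CharZero K] {f : K[X]} (hf : f ≠ 0) :
    resultant f (derivative f) f.natDegree (f.natDegree - 1) ≠ 0 ↔ f.Separable := by
  rw [← natDegree_derivative, Ne, resultant_eq_zero_iff]
  simp [hf, Separable]

theorem natDegree_eq_and_separable_of_coeff_mul_resultant_ne_zero [CharZero K] {f : K[X]}
    {n : ℕ} (hf : f.natDegree ≤ n)
    (h : f.coeff n * resultant f (derivative f) n (n - 1) ≠ 0) :
    f.natDegree = n ∧ f.Separable := by
  obtain ⟨hc, hres⟩ := mul_ne_zero_iff.mp h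
  have hdeg : f.natDegree = n := hf.antisymm (le_natDegree_of_ne_zero hc)
  have hf0 : f ≠ 0 := fun h0 => hc (by simp [h0])
  exact ⟨hdeg, (resultant_derivative_ne_zero_iff_separable hf0).mp (by rwa [hdeg])⟩

theorem coeff_mul_resultant_X_pow_sub_one_ne_zero [CharZero K] {n : ℕ} (hn : 0 < n) :
    (X ^ n - 1 : K[X]).coeff n * resultant (X ^ n - 1) (derivative (X ^ n - 1)) n (n - 1) ≠
      0 := by
  have hmonic : (X ^ n - 1 : K[X]).Monic := by simpa using monic_X_pow_sub_C (1 : K) hn.ne'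
  have hdeg : (X ^ n - 1 : K[X]).natDegree = n := by
    simpa using natDegree_X_pow_sub_C (n := n) (r := (1 : K))
  have hsep : (X ^ n - 1 : K[X]).Separable := by
    simpa using separable_X_pow_sub_C (1 : K) (by simpa using hn.ne') one_ne_zero
  have hres := (resultant_derivative_ne_zero_iff_separable hmonic.ne_zero).mpr hsep
  have hcoeff : (X ^ n - 1 : K[X]).coeff n = 1 := by simpa [hdeg] using hmonic.coeff_natDegree
  rw [hdeg] at hres
  rwa [hcoeff, one_mul]

theorem card_roots_toFinset_of_separable [IsAlgClosed K] [DecidableEq K] {f : K[X]}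
    (hf : f.Separable) : f.roots.toFinset.card = f.natDegree := by
  rw [Multiset.toFinset_card_of_nodup (nodup_roots hf), IsAlgClosed.card_roots_eq_natDegree]

end

/-- For every `n ≥ 1` there exists a nonzero polynomial `p` in the `2n`
complex variables `s_0, …, s_{2n−1}` such that whenever `p(s) ≠ 0`, the polynomial
`Q_n^{(s)}` has degree exactly `n` and `n` pairwise distinct (simple) roots.  In particular
the set of `s` for which `Q_n^{(s)}` fails to have `n` simple roots is contained in a proper
algebraic subset of `ℂ^{2n}`. -/
theorem generic_simple_roots (n : ℕ) (hn : 1 ≤ n) :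
    ∃ p : MvPolynomial (Fin (2 * n)) ℂ, p ≠ 0 ∧
      ∀ s : Fin (2 * n) → ℂ, MvPolynomial.eval s p ≠ 0 →
        (QJac n s).degree = (n : ℕ) ∧ (QJac n s).roots.toFinset.card = n := by
  set F := (padeMatrix n (MvPolynomial.X : Fin (2 * n) → MvPolynomial (Fin (2 * n)) ℂ)).det
  have heval : ∀ s, MvPolynomial.eval s (F.coeff n * resultant F (derivative F) n (n - 1)) =
      (QJac n s).coeff n * resultant (QJac n s) (derivative (QJac n s)) n (n - 1) := fun s => by
    have hX : MvPolynomial.eval s ∘ MvPolynomial.X = s := funext fun _ => MvPolynomial.eval_X _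
    have hF : F.map (MvPolynomial.eval s) = QJac n s := by
      rw [map_det_padeMatrix, QJac_eq_det_padeMatrix, hX]
    rw [map_mul, ← hF, coeff_map, derivative_map, resultant_map_map]
  refine ⟨F.coeff n * resultant F (derivative F) n (n - 1), fun h0 => ?_, fun s hs => ?_⟩
  · have := heval fun k => if (k : ℕ) = 0 ∨ (k : ℕ) = n then 1 else 0
    rw [h0, map_zero, QJac_eq_det_padeMatrix, det_padeMatrix_eq_X_pow_sub_one hn] at this
    exact coeff_mul_resultant_X_pow_sub_one_ne_zero hn this.symm
  · obtain ⟨hdeg, hsep⟩ := natDegree_eq_and_separable_of_coeff_mul_resultant_ne_zero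
      (natDegree_det_padeMatrix_le n s) (heval s ▸ hs)
    exact ⟨(degree_eq_iff_natDegree_eq hsep.ne_zero).mpr hdeg,
      (card_roots_toFinset_of_separable hsep).trans hdeg⟩
end

section
/- Then s_k = Σ_{j=0}^{n−1} ρ_j z_j^{k−1} for every k = 0, 1, …, 2n−1. That is, the overdetermined linear system V x = (s_0, …, s_{2n−1})^⊤, where V is the 2n×n matrix with entries V[k,j] = z_j^{k−1} (0 ≤ k ≤ 2n−1, 0 ≤ j ≤ n−1), is consistent, and (ρ_0, …, ρ_{n−1})^⊤ is its unique solution: any x ∈ ℂ^n with s_k = Σ_j x_j z_j^{k−1} for all k = 0, …, 2n−1 satisfies x_j = ρ_j for all j. -/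
/-! Lagrange interpolation of `P` at the roots of `Q = ∏ (X - zⱼ)` is the partial fraction
decomposition `s₀ P / Q = ∑ⱼ cⱼ / (X - zⱼ)` with `cⱼ = s₀ P(zⱼ) / Q'(zⱼ) = ρⱼ / zⱼ`. Reversed, it
reads `s₀ p / q = ∑ⱼ cⱼ / (1 - zⱼ X) = ∑ₖ (∑ⱼ cⱼ zⱼᵏ) Xᵏ`, while the Padé condition says that
`s₀ p / q ≡ ∑ₖ sₖ Xᵏ` modulo `X²ⁿ`, because `q(0) = 1`. Comparing coefficients gives
`sₖ = ∑ⱼ ρⱼ zⱼᵏ⁻¹`; uniqueness is the invertibility of the Vandermonde matrix formed by the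
rows `k = 1, …, n`. -/

open Polynomial Finset

namespace Polynomial

section CommRing

variable {R : Type*} [CommRing R] {ι : Type*}

lemma reflect_finsetSum (N : ℕ) (s : Finset ι) (f : ι → R[X]) :
    reflect N (∑ i ∈ s, f i) = ∑ i ∈ s, reflect N (f i) :=
  map_sum (AddMonoidHom.mk' (reflect N) fun f g => reflect_add f g N) f s

lemma reflect_card_nodal [Nontrivial R] [DecidableEq ι] (s : Finset ι) (v : ι → R) :
    reflect #s (Lagrange.nodal s v) = ∏ i ∈ s, (1 - C (v i) * X) := by
  induction s using Finset.induction_on with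
  | empty => simp [Lagrange.nodal_empty]
  | insert a s ha ih =>
    rw [Lagrange.nodal_insert_eq_nodal ha, card_insert_of_notMem ha, prod_insert ha, add_comm,
      reflect_mul _ _ (natDegree_X_sub_C_le _) Lagrange.natDegree_nodal.le, ih, reflect_sub,
      reflect_one_X, reflect_C, pow_one]

/-- `∑ᵢ cᵢ / (1 - aᵢ X) ≡ ∑ₖ (∑ᵢ cᵢ aᵢᵏ) Xᵏ` modulo `Xᵐ`, with the denominators cleared. -/
lemma X_pow_dvd_sum_mul_prod_erase_sub_prod_mul_moments [DecidableEq ι] (s : Finset ι)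
    (c a : ι → R) (m : ℕ) :
    X ^ m ∣ ∑ i ∈ s, C (c i) * ∏ j ∈ s.erase i, (1 - C (a j) * X) -
      (∏ i ∈ s, (1 - C (a i) * X)) * ∑ k ∈ range m, C (∑ i ∈ s, c i * a i ^ k) * X ^ k := by
  have hmoments : ∑ k ∈ range m, C (∑ i ∈ s, c i * a i ^ k) * X ^ k =
      ∑ i ∈ s, C (c i) * ∑ k ∈ range m, (C (a i) * X) ^ k := by
    simp_rw [map_sum, sum_mul, mul_sum, mul_pow, ← C_pow, C_mul, mul_assoc]
    exact sum_comm
  have hgeom : ∀ i ∈ s, (∏ j ∈ s, (1 - C (a j) * X)) * ∑ k ∈ range m, (C (a i) * X) ^ k =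
      (∏ j ∈ s.erase i, (1 - C (a j) * X)) * (1 - (C (a i) * X) ^ m) := fun i hi => by
    rw [← mul_prod_erase s _ hi, ← mul_neg_geom_sum]
    ring
  rw [hmoments, mul_sum, ← sum_sub_distrib]
  refine dvd_sum fun i hi => ?_
  rw [mul_left_comm, hgeom i hi, mul_pow, ← C_pow]
  exact Dvd.intro_left (C (c i) * (∏ j ∈ s.erase i, (1 - C (a j) * X)) * C (a i ^ m)) (by ring)

end CommRing

section Field

variable {K : Type*} [Field K] {ι : Type*}

lemma X_pow_dvd_of_dvd_mul_of_coeff_zero_ne_zero {q f : K[X]} {m : ℕ} (hq : q.coeff 0 ≠ 0)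
    (h : X ^ m ∣ q * f) : X ^ m ∣ f :=
  ((irreducible_X.coprime_iff_not_dvd.2 (mt X_dvd_iff.1 hq)).pow_left).dvd_of_dvd_mul_left h

lemma eq_sum_C_mul_nodal_erase [DecidableEq ι] {s : Finset ι} {v : ι → K}
    (hvs : Set.InjOn v s) {f : K[X]} (hf : f.degree < #s) :
    f = ∑ i ∈ s, C (f.eval (v i) / (derivative (Lagrange.nodal s v)).eval (v i)) *
      Lagrange.nodal (s.erase i) v := by
  conv_lhs => rw [Lagrange.eq_interpolate hvs hf, Lagrange.interpolate_apply]
  refine sum_congr rfl fun i hi => ?_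
  rw [Lagrange.basis_eq_prod_sub_inv_mul_nodal_div hi, ← Lagrange.nodal_erase_eq_nodal_div hi,
    Lagrange.nodalWeight_eq_eval_derivative_nodal hi, div_eq_mul_inv, C_mul, mul_assoc]

lemma coeff_eq_moments_of_X_pow_dvd_pade [Fintype ι] [DecidableEq ι] {z : ι → K}
    (hz : Function.Injective z) {P : K[X]} (hP : P.degree < Fintype.card ι) (s : ℕ → K) {m : ℕ}
    (hpade : X ^ m ∣ C (s 0) * reflect (Fintype.card ι - 1) P -
      reflect (Fintype.card ι) (Lagrange.nodal univ z) * ∑ k ∈ range m, C (s k) * X ^ k) :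
    ∀ k < m, s k = ∑ i, s 0 * P.eval (z i) /
      (derivative (Lagrange.nodal univ z)).eval (z i) * z i ^ k := by
  set c : ι → K := fun i => s 0 * P.eval (z i) / (derivative (Lagrange.nodal univ z)).eval (z i)
  set q : K[X] := ∏ i, (1 - C (z i) * X)
  have hinterp : C (s 0) * reflect (Fintype.card ι - 1) P =
      ∑ i, C (c i) * ∏ j ∈ univ.erase i, (1 - C (z j) * X) := by
    conv_lhs => rw [eq_sum_C_mul_nodal_erase hz.injOn hP, reflect_finsetSum, mul_sum]
    refine sum_congr rfl fun i _ => ?_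
    rw [reflect_C_mul, ← mul_assoc, ← C_mul, ← card_univ, ← card_erase_of_mem (mem_univ i),
      reflect_card_nodal, ← mul_div_assoc]
  have hq : reflect (Fintype.card ι) (Lagrange.nodal univ z) = q := by
    rw [← card_univ, reflect_card_nodal]
  have hmoments := X_pow_dvd_sum_mul_prod_erase_sub_prod_mul_moments univ c z m
  rw [← hinterp] at hmoments
  rw [hq] at hpade
  have hdiff : X ^ m ∣ q * (∑ k ∈ range m, C (s k) * X ^ k -
      ∑ k ∈ range m, C (∑ i, c i * z i ^ k) * X ^ k) := by
    convert dvd_sub hmoments hpade using 1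
    ring
  have hq0 : q.coeff 0 ≠ 0 := by simp [q, coeff_zero_eq_eval_zero, eval_prod]
  intro k hk
  have := X_pow_dvd_iff.1 (X_pow_dvd_of_dvd_mul_of_coeff_zero_ne_zero hq0 hdiff) k hk
  simpa only [coeff_sub, finsetSum_coeff, coeff_C_mul_X_pow, sum_ite_eq, mem_range, if_pos hk,
    sub_eq_zero] using this

end Field

end Polynomial

theorem vandermonde_residues_general (n : ℕ) (hn : 1 ≤ n) (s : ℕ → ℂ)
    (z : Fin n → ℂ) (hz : Function.Injective z) (hz0 : ∀ j, z j ≠ 0)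
    (P : Polynomial ℂ) (hPdeg : P.natDegree = n - 1)
    (hPade : ∀ k < 2 * n,
      (C (s 0) * Polynomial.reflect (n - 1) P -
          Polynomial.reflect n (∏ j, (X - C (z j))) *
            ∑ k ∈ Finset.range (2 * n), C (s k) * X ^ k).coeff k = 0) :
    (∀ k < 2 * n,
      s k = ∑ j : Fin n,
        (s 0 * z j * eval (z j) P / eval (z j) (derivative (∏ i, (X - C (z i)))))
          * z j ^ ((k : ℤ) - 1)) ∧
    ∀ x : Fin n → ℂ,
      (∀ k < 2 * n, s k = ∑ j : Fin n, x j * z j ^ ((k : ℤ) - 1)) →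
      ∀ j, x j = s 0 * z j * eval (z j) P / eval (z j) (derivative (∏ i, (X - C (z i)))) := by
  set ρ : Fin n → ℂ := fun j =>
    s 0 * z j * eval (z j) P / eval (z j) (derivative (∏ i, (X - C (z i))))
  have hPdeg' : P.degree < Fintype.card (Fin n) := by
    rw [Fintype.card_fin]
    exact degree_le_natDegree.trans_lt (by exact_mod_cast (by omega : P.natDegree < n))
  have hmoments := coeff_eq_moments_of_X_pow_dvd_pade hz hPdeg' s (m := 2 * n)
    (X_pow_dvd_iff.2 (by simpa [Lagrange.nodal] using hPade))
  have hρ : ∀ j (k : ℕ), ρ j * z j ^ ((k : ℤ) - 1) = s 0 * P.eval (z j) /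
      (derivative (Lagrange.nodal univ z)).eval (z j) * z j ^ k := fun j k => by
    rw [zpow_sub₀ (hz0 j), zpow_one, zpow_natCast, Lagrange.nodal_eq]
    linear_combination (s 0 * P.eval (z j) / (derivative (∏ i, (X - C (z i)))).eval (z j) *
      z j ^ k) * mul_inv_cancel₀ (hz0 j)
  have hsolution : ∀ k < 2 * n, s k = ∑ j, ρ j * z j ^ ((k : ℤ) - 1) := fun k hk => by
    simp_rw [hρ, hmoments k hk]
  refine ⟨hsolution, fun x hx => ?_⟩
  have hzero : x - ρ = 0 := by
    refine Matrix.eq_zero_of_forall_pow_sum_mul_pow_eq_zero hz fun i => ?_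
    have hk : (i : ℕ) + 1 < 2 * n := by omega
    simp_rw [Pi.sub_apply, sub_mul, sum_sub_distrib]
    simpa [sub_eq_zero] using (hx _ hk).symm.trans (hsolution _ hk)
  exact fun j => sub_eq_zero.1 (congrFun hzero j)

/-- Let `n ≥ 1`, `s_0, …, s_{2n−1} ∈ ℂ`, let `Q(w) = ∏_j (w − z_j)` be monic
of degree `n` with pairwise distinct nonzero roots, and let `P` be monic of degree `n−1`.
Assume `s_0 w P(w)/Q(w)` is the `[n−1/n]` Padé approximant at infinity of `Σ_k s_k w^{−k}`:
with the reversed polynomials `p(z) = z^{n−1}P(1/z)` and `q(z) = z^n Q(1/z)`, the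
coefficients of `z^0, …, z^{2n−1}` in `s_0 p(z) − q(z)·Σ_{k<2n} s_k z^k` all vanish.
Define `ρ_j = s_0 z_j P(z_j)/Q′(z_j)`.  Then `s_k = Σ_j ρ_j z_j^{k−1}` for every
`0 ≤ k ≤ 2n−1`, i.e. the overdetermined Vandermonde system `V x = s` is consistent with
solution `ρ`, and `ρ` is its unique solution. -/
theorem vandermonde_residues (n : ℕ) (hn : 1 ≤ n) (s : ℕ → ℂ)
    (z : Fin n → ℂ) (hz : Function.Injective z) (hz0 : ∀ j, z j ≠ 0)
    (P : Polynomial ℂ) (hP : P.Monic) (hPdeg : P.natDegree = n - 1)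
    (hPade : ∀ k < 2 * n,
      (C (s 0) * Polynomial.reflect (n - 1) P -
          Polynomial.reflect n (∏ j, (X - C (z j))) *
            ∑ k ∈ Finset.range (2 * n), C (s k) * X ^ k).coeff k = 0) :
    (∀ k < 2 * n,
      s k = ∑ j : Fin n,
        (s 0 * z j * eval (z j) P / eval (z j) (derivative (∏ i, (X - C (z i)))))
          * z j ^ ((k : ℤ) - 1)) ∧
    ∀ x : Fin n → ℂ,
      (∀ k < 2 * n, s k = ∑ j : Fin n, x j * z j ^ ((k : ℤ) - 1)) →
      ∀ j, x j = s 0 * z j * eval (z j) P / eval (z j) (derivative (∏ i, (X - C (z i)))) :=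
  vandermonde_residues_general n hn s z hz hz0 P hPdeg hPade
end
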